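/- arXiv:2110.14512 — 3 statements merged into one kernel-verified Lean document; each statement's English description precedes it below -/
import Mathlib

section
/- If the series ∑_k (α Δ β)(k)/(k+1) converges, then the set {k : α(k) ≠ β(k)} has asymptotic density zero. In other words, α E_2 β implies α Z_0 β. -/
def symmDiff' (α β : ℕ → Bool) (k : ℕ) : ℝ := if α k ≠ β k then 1 else 0

def E2 (α β : ℕ → Bool) : Prop := Summable (fun k => symmDiff' α β k / (k + 1))

noncomputable def dn (α β : ℕ → Bool) (s : ℕ) : ℝ :=
  ((Finset.range (s + 1)).filter (fun i => α i ≠ β i)).card / (s + 1)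

def Z0 (α β : ℕ → Bool) : Prop :=
  Filter.Tendsto (fun s => dn α β s) Filter.atTop (nhds 0)

theorem E2_implies_Z0 (α β : ℕ → Bool) (h : E2 α β) : Z0 α β := by
  set f : ℕ → ℝ := fun k => symmDiff' α β k / (k + 1) with hf
  have hann : ∀ k, 0 ≤ symmDiff' α β k := by
    intro k; unfold symmDiff'; split <;> norm_num
  have hale : ∀ k, symmDiff' α β k ≤ 1 := by
    intro k; unfold symmDiff'; split <;> norm_num
  have hfnn : ∀ k, 0 ≤ f k := by
    intro k; apply div_nonneg (hann k); positivity
  rw [Z0, Metric.tendsto_atTop]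
  intro ε hε
  have htail : Filter.Tendsto (fun i => ∑' k, f (k + i)) Filter.atTop (nhds 0) :=
    tendsto_sum_nat_add f
  rw [Metric.tendsto_atTop] at htail
  obtain ⟨N, hN⟩ := htail (ε / 2) (by positivity)
  have hNle : ∑' k, f (k + N) < ε / 2 := by
    have := hN N le_rfl
    rwa [Real.dist_eq, sub_zero, abs_of_nonneg (tsum_nonneg fun k => hfnn _)] at this
  obtain ⟨M, hM⟩ := exists_nat_gt (max (N:ℝ) (2 * N / ε))
  refine ⟨M, fun s hs => ?_⟩
  have hsN' : (N : ℝ) ≤ s :=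
    le_of_lt ((le_max_left (N:ℝ) _).trans_lt (hM.trans_le (Nat.cast_le.2 hs)))
  have hsN : N ≤ s := by exact_mod_cast hsN'
  have hs1 : (0:ℝ) < (s:ℝ) + 1 := by positivity
  -- card as a sum
  have hcard : (((Finset.range (s + 1)).filter (fun i => α i ≠ β i)).card : ℝ)
      = ∑ i ∈ Finset.range (s + 1), symmDiff' α β i := by
    rw [Finset.card_filter]
    push_cast
    refine Finset.sum_congr rfl fun i _ => ?_
    unfold symmDiff'; split <;> simp_all
  -- split the sum
  have hsplit : ∑ i ∈ Finset.range (s + 1), symmDiff' α β i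
      = ∑ i ∈ Finset.range N, symmDiff' α β i
        + ∑ i ∈ Finset.Ico N (s + 1), symmDiff' α β i := by
    rw [Finset.range_eq_Ico, ← Finset.sum_Ico_consecutive _ (Nat.zero_le N) (by omega), ← Finset.range_eq_Ico]
  have h1 : ∑ i ∈ Finset.range N, symmDiff' α β i ≤ N := by
    calc ∑ i ∈ Finset.range N, symmDiff' α β i ≤ ∑ _i ∈ Finset.range N, (1:ℝ) :=
          Finset.sum_le_sum fun i _ => hale i
      _ = N := by simp
  have h2 : ∑ i ∈ Finset.Ico N (s + 1), symmDiff' α β i ≤ ((s:ℝ) + 1) * (ε / 2) := by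
    have step : ∀ i ∈ Finset.Ico N (s + 1), symmDiff' α β i ≤ ((s:ℝ) + 1) * f i := by
      intro i hi
      simp only [Finset.mem_Ico] at hi
      have hi1 : (0:ℝ) < (i:ℝ) + 1 := by positivity
      have hle : (i:ℝ) + 1 ≤ (s:ℝ) + 1 := by
        have : (i:ℝ) ≤ s := by exact_mod_cast Nat.lt_succ_iff.1 hi.2
        linarith
      rw [hf]
      rw [mul_div_assoc']
      rw [le_div_iff₀ hi1]
      calc symmDiff' α β i * ((i:ℝ) + 1) ≤ symmDiff' α β i * ((s:ℝ) + 1) :=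
            mul_le_mul_of_nonneg_left hle (hann i)
        _ = ((s:ℝ) + 1) * symmDiff' α β i := by ring
    calc ∑ i ∈ Finset.Ico N (s + 1), symmDiff' α β i
        ≤ ∑ i ∈ Finset.Ico N (s + 1), ((s:ℝ) + 1) * f i := Finset.sum_le_sum step
      _ = ((s:ℝ) + 1) * ∑ i ∈ Finset.Ico N (s + 1), f i := by rw [Finset.mul_sum]
      _ ≤ ((s:ℝ) + 1) * ∑' k, f (k + N) := by
          apply mul_le_mul_of_nonneg_left _ (le_of_lt hs1)
          rw [Finset.sum_Ico_eq_sum_range]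
          have hsum : Summable (fun k => f (k + N)) := by
            rw [hf]; exact (summable_nat_add_iff N).2 h
          have := Summable.sum_le_tsum (Finset.range (s + 1 - N)) (fun k _ => hfnn (k + N)) hsum
          simpa [add_comm] using this
      _ ≤ ((s:ℝ) + 1) * (ε / 2) :=
          mul_le_mul_of_nonneg_left (le_of_lt hNle) (le_of_lt hs1)
  -- conclude
  have hdn : dn α β s ≤ (N : ℝ) / ((s:ℝ) + 1) + ε / 2 := by
    rw [dn, hcard, hsplit]
    rw [div_le_iff₀ hs1]
    have : ((N : ℝ) / ((s:ℝ) + 1) + ε / 2) * ((s:ℝ) + 1)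
        = (N : ℝ) + ((s:ℝ) + 1) * (ε / 2) := by field_simp
    rw [this]
    linarith
  have hsmall : (N : ℝ) / ((s:ℝ) + 1) < ε / 2 := by
    rw [div_lt_iff₀ hs1]
    have hM2 : 2 * (N:ℝ) / ε < (s:ℝ) + 1 := by
      have := lt_of_le_of_lt (le_max_right (N:ℝ) (2 * N / ε)) (lt_of_lt_of_le hM (Nat.cast_le.2 hs))
      linarith
    have := (div_lt_iff₀ hε).1 hM2
    linarith
  have hdnn : 0 ≤ dn α β s := by
    rw [dn]; positivity
  rw [Real.dist_eq, sub_zero, abs_of_nonneg hdnn]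
  linarith
end

section
/- If A ⊆ ℕ is such that ∑_{k ∈ A} 1/(k+1) converges, then for every ε > 0 there are only finitely many s with card(A ∩ {0,...,s})/(s+1) > ε; equivalently, A has asymptotic density zero. -/
theorem summable_reciprocals_implies_density_zero (A : Set ℕ) [DecidablePred (· ∈ A)]
    (h : Summable (fun k => if k ∈ A then (1 : ℝ) / (k + 1) else 0)) :
    (∀ ε > (0 : ℝ),
      {s : ℕ | ε < ((Finset.range (s + 1)).filter (· ∈ A)).card / ((s : ℝ) + 1)}.Finite) ∧
    Filter.Tendsto
      (fun s => (((Finset.range (s + 1)).filter (· ∈ A)).card : ℝ) / ((s : ℝ) + 1))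
      Filter.atTop (nhds 0) := by
  set f : ℕ → ℝ := fun k => if k ∈ A then (1 : ℝ) / (k + 1) else 0 with hf
  have hf0 : ∀ k, 0 ≤ f k := by
    intro k; by_cases hk : k ∈ A <;> simp only [hf, hk, if_true, if_false, le_refl]; positivity
  set d : ℕ → ℝ := fun s => (((Finset.range (s + 1)).filter (· ∈ A)).card : ℝ) / ((s : ℝ) + 1)
    with hd
  have hd0 : ∀ s, 0 ≤ d s := by intro s; positivity
  have key : ∀ m s : ℕ, d s ≤ (m : ℝ) / ((s : ℝ) + 1) + ∑' k, f (k + m) := by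
    intro m s
    have hs1 : (0 : ℝ) < (s : ℝ) + 1 := by positivity
    have hsub : (Finset.range (s + 1)).filter (· ∈ A) ⊆
        Finset.range m ∪ (Finset.Ico m (s + 1)).filter (· ∈ A) := by
      intro k hk
      simp only [Finset.mem_filter, Finset.mem_range] at hk
      rcases lt_or_ge k m with h1 | h1
      · exact Finset.mem_union_left _ (Finset.mem_range.2 h1)
      · exact Finset.mem_union_right _
          (Finset.mem_filter.2 ⟨Finset.mem_Ico.2 ⟨h1, hk.1⟩, hk.2⟩)
    have hcard : ((Finset.range (s + 1)).filter (· ∈ A)).card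
        ≤ m + ((Finset.Ico m (s + 1)).filter (· ∈ A)).card := by
      calc ((Finset.range (s + 1)).filter (· ∈ A)).card
          ≤ (Finset.range m ∪ (Finset.Ico m (s + 1)).filter (· ∈ A)).card :=
            Finset.card_le_card hsub
        _ ≤ m + ((Finset.Ico m (s + 1)).filter (· ∈ A)).card := by
            simpa using Finset.card_union_le (Finset.range m)
              ((Finset.Ico m (s + 1)).filter (· ∈ A))
    -- each element of the filtered Ico contributes at least 1/(s+1)
    have hstep : (((Finset.Ico m (s + 1)).filter (· ∈ A)).card : ℝ) * (1 / ((s : ℝ) + 1))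
        ≤ ∑ k ∈ (Finset.Ico m (s + 1)).filter (· ∈ A), f k := by
      have := Finset.card_nsmul_le_sum ((Finset.Ico m (s + 1)).filter (· ∈ A)) f
        (1 / ((s : ℝ) + 1)) ?_
      · simpa [nsmul_eq_mul] using this
      · intro k hk
        simp only [Finset.mem_filter, Finset.mem_Ico] at hk
        have hks : k + 1 ≤ s + 1 := by omega
        have : (1 : ℝ) / ((s : ℝ) + 1) ≤ 1 / ((k : ℝ) + 1) := by
          apply one_div_le_one_div_of_le (by positivity)
          exact_mod_cast hks
        simpa [hf, hk.2] using this
    have hsum2 : ∑ k ∈ (Finset.Ico m (s + 1)).filter (· ∈ A), f k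
        ≤ ∑ k ∈ Finset.Ico m (s + 1), f k :=
      Finset.sum_le_sum_of_subset_of_nonneg (Finset.filter_subset _ _)
        (fun k _ _ => hf0 k)
    have hsum3 : ∑ k ∈ Finset.Ico m (s + 1), f k ≤ ∑' k, f (k + m) := by
      rw [Finset.sum_Ico_eq_sum_range]
      have hrw : ∑ i ∈ Finset.range (s + 1 - m), f (m + i)
          = ∑ i ∈ Finset.range (s + 1 - m), f (i + m) := by
        exact Finset.sum_congr rfl fun i _ => by rw [add_comm]
      rw [hrw]
      exact Summable.sum_le_tsum _ (fun i _ => hf0 _) ((summable_nat_add_iff m).2 h)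
    have hT : (((Finset.Ico m (s + 1)).filter (· ∈ A)).card : ℝ)
        ≤ ((s : ℝ) + 1) * ∑' k, f (k + m) := by
      have := hstep.trans (hsum2.trans hsum3)
      rw [mul_one_div] at this
      calc (((Finset.Ico m (s + 1)).filter (· ∈ A)).card : ℝ)
          = (((Finset.Ico m (s + 1)).filter (· ∈ A)).card : ℝ) / ((s : ℝ) + 1)
            * ((s : ℝ) + 1) := by field_simp
        _ ≤ (∑' k, f (k + m)) * ((s : ℝ) + 1) := by
            apply mul_le_mul_of_nonneg_right this hs1.le
        _ = ((s : ℝ) + 1) * ∑' k, f (k + m) := mul_comm _ _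
    have hnum : (((Finset.range (s + 1)).filter (· ∈ A)).card : ℝ)
        ≤ (m : ℝ) + ((s : ℝ) + 1) * ∑' k, f (k + m) := by
      have : (((Finset.range (s + 1)).filter (· ∈ A)).card : ℝ)
          ≤ (m : ℝ) + (((Finset.Ico m (s + 1)).filter (· ∈ A)).card : ℝ) := by
        exact_mod_cast hcard
      linarith
    have : d s ≤ ((m : ℝ) + ((s : ℝ) + 1) * ∑' k, f (k + m)) / ((s : ℝ) + 1) :=
      div_le_div_of_nonneg_right hnum hs1.le |>.trans_eq rfl
    calc d s ≤ ((m : ℝ) + ((s : ℝ) + 1) * ∑' k, f (k + m)) / ((s : ℝ) + 1) := this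
      _ = (m : ℝ) / ((s : ℝ) + 1) + ∑' k, f (k + m) := by field_simp
  have hTtail : Filter.Tendsto (fun m => ∑' k, f (k + m)) Filter.atTop (nhds 0) :=
    tendsto_sum_nat_add f
  have htend : Filter.Tendsto d Filter.atTop (nhds 0) := by
    rw [Metric.tendsto_atTop]
    intro ε hε
    obtain ⟨m, hm⟩ := Metric.tendsto_atTop.1 hTtail (ε / 2) (half_pos hε)
    have hTm : ∑' k, f (k + m) < ε / 2 := by
      have := hm m le_rfl
      rwa [Real.dist_eq, sub_zero, abs_of_nonneg (tsum_nonneg fun k => hf0 _)] at this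
    obtain ⟨N, hN⟩ := exists_nat_gt ((m : ℝ) / (ε / 2))
    refine ⟨N, fun s hs => ?_⟩
    rw [Real.dist_eq, sub_zero, abs_of_nonneg (hd0 s)]
    have hmN : (m : ℝ) < ε / 2 * N := by rw [div_lt_iff₀ (half_pos hε)] at hN; linarith
    have hNs : (N : ℝ) ≤ (s : ℝ) + 1 := by
      have : (N : ℝ) ≤ (s : ℝ) := by exact_mod_cast hs
      linarith
    have h2 : (m : ℝ) / ((s : ℝ) + 1) < ε / 2 := by
      rw [div_lt_iff₀ (by positivity)]
      calc (m : ℝ) < ε / 2 * N := hmN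
        _ ≤ ε / 2 * ((s : ℝ) + 1) := by
            apply mul_le_mul_of_nonneg_left hNs (half_pos hε).le
    have h1 := key m s
    linarith
  refine ⟨fun ε hε => ?_, htend⟩
  obtain ⟨N, hN⟩ := Metric.tendsto_atTop.1 htend ε hε
  apply Set.Finite.subset (Set.finite_Iio N)
  intro s hs
  simp only [Set.mem_setOf_eq] at hs
  by_contra hsN
  have hsN' : N ≤ s := not_lt.1 hsN
  have hds := hN s hsN'
  rw [Real.dist_eq, sub_zero, abs_of_nonneg (hd0 s)] at hds
  exact absurd hs (not_lt.2 hds.le)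
end

section
/- Let β_0, ..., β_n be reals that are pairwise not Z_0-equivalent, and let q_0 be a positive real with q_0 < min over i < j of limsup_s dn(β_i, β_j; s). Then for any real α with α Z_0 β_{i0}: the quantity m_i(t) := card{ t' ≤ t : dn(α, β_i; t') > q_0 } is bounded in t for i = i_0, and tends to infinity as t → ∞ for every i ≠ i_0. -/
/-- `m_i(t) = card { t' ≤ t : dn(α, β_i; t') > q₀ }`. -/
noncomputable def mcount (α βi : ℕ → Bool) (q₀ : ℝ) (t : ℕ) : ℕ :=
  ((Finset.range (t + 1)).filter (fun t' => q₀ < dn α βi t')).card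

lemma dn_nonneg (a b : ℕ → Bool) (s : ℕ) : 0 ≤ dn a b s := by
  unfold dn; positivity

lemma dn_comm (a b : ℕ → Bool) (s : ℕ) : dn a b s = dn b a s := by
  unfold dn
  have h : (Finset.range (s + 1)).filter (fun i => a i ≠ b i) =
      (Finset.range (s + 1)).filter (fun i => b i ≠ a i) :=
    Finset.filter_congr fun i _ => by simp [ne_comm]
  rw [h]

lemma dn_triangle (a b c : ℕ → Bool) (s : ℕ) : dn a c s ≤ dn a b s + dn b c s := by
  unfold dn
  rw [← add_div]
  apply div_le_div_of_nonneg_right ?_ (by positivity)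
  have hsub : (Finset.range (s + 1)).filter (fun i => a i ≠ c i) ⊆
      ((Finset.range (s + 1)).filter (fun i => a i ≠ b i)) ∪
      ((Finset.range (s + 1)).filter (fun i => b i ≠ c i)) := by
    intro i hi
    simp only [Finset.mem_filter, Finset.mem_union] at *
    rcases hi with ⟨hr, hac⟩
    by_cases hab : a i = b i
    · exact Or.inr ⟨hr, by rw [← hab]; exact hac⟩
    · exact Or.inl ⟨hr, hab⟩
  calc (((Finset.range (s + 1)).filter (fun i => a i ≠ c i)).card : ℝ)
      ≤ ((((Finset.range (s + 1)).filter (fun i => a i ≠ b i)) ∪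
          ((Finset.range (s + 1)).filter (fun i => b i ≠ c i))).card : ℝ) := by
        exact_mod_cast Finset.card_le_card hsub
    _ ≤ _ := by exact_mod_cast Finset.card_union_le _ _

theorem Z0_learning_counts (n : ℕ) (β : Fin (n + 1) → ℕ → Bool)
    (hβ : ∀ i j, i ≠ j → ¬ Z0 (β i) (β j))
    (q₀ : ℝ) (hq₀ : 0 < q₀)
    (hq₀' : ∀ i j, i ≠ j →
      q₀ < Filter.limsup (fun s => dn (β i) (β j) s) Filter.atTop)
    (α : ℕ → Bool) (i₀ : Fin (n + 1)) (hα : Z0 α (β i₀)) :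
    (∃ B, ∀ t, mcount α (β i₀) q₀ t ≤ B) ∧
    (∀ i, i ≠ i₀ →
      Filter.Tendsto (fun t => mcount α (β i) q₀ t) Filter.atTop Filter.atTop) := by
  constructor
  · -- Part 1: bounded for i = i₀
    obtain ⟨N, hN⟩ := Metric.tendsto_atTop.1 hα q₀ hq₀
    refine ⟨N, fun t => ?_⟩
    have hsub : (Finset.range (t + 1)).filter (fun t' => q₀ < dn α (β i₀) t') ⊆
        Finset.range N := by
      intro s hs
      simp only [Finset.mem_filter, Finset.mem_range] at *
      by_contra h
      have hge : N ≤ s := by omega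
      have := hN s hge
      rw [Real.dist_eq, sub_zero, abs_of_nonneg (dn_nonneg _ _ _)] at this
      linarith [hs.2]
    calc mcount α (β i₀) q₀ t ≤ (Finset.range N).card := Finset.card_le_card hsub
      _ = N := Finset.card_range N
  · -- Part 2: tends to infinity for i ≠ i₀
    intro i hi
    have hL : q₀ < Filter.limsup (fun s => dn (β i₀) (β i) s) Filter.atTop :=
      hq₀' i₀ i (Ne.symm hi)
    obtain ⟨c, hc1, hc2⟩ := exists_between hL
    have hcob : Filter.IsCoboundedUnder (· ≤ ·) Filter.atTop
        (fun s => dn (β i₀) (β i) s) :=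
      Filter.isCoboundedUnder_le_of_le _ (fun s => dn_nonneg _ _ _)
    have hfr := Filter.frequently_lt_of_lt_limsup hcob hc2
    have hev : ∀ᶠ s in Filter.atTop, dn α (β i₀) s < c - q₀ := by
      have h := hα (Metric.ball_mem_nhds 0 (by linarith : (0:ℝ) < c - q₀))
      filter_upwards [h] with s hs
      simp only [Set.mem_preimage, Metric.mem_ball, Real.dist_eq, sub_zero] at hs
      calc dn α (β i₀) s ≤ |dn α (β i₀) s| := le_abs_self _
        _ < c - q₀ := hs
    have hfreq : ∃ᶠ s in Filter.atTop, q₀ < dn α (β i) s := by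
      refine (hfr.and_eventually hev).mono ?_
      rintro s ⟨h1, h2⟩
      have htri : dn (β i₀) (β i) s ≤ dn (β i₀) α s + dn α (β i) s := dn_triangle _ _ _ _
      rw [dn_comm (β i₀) α] at htri
      linarith
    have hinf : {s | q₀ < dn α (β i) s}.Infinite :=
      Nat.frequently_atTop_iff_infinite.1 hfreq
    rw [Filter.tendsto_atTop]
    intro B
    obtain ⟨F, hFsub, hFcard⟩ := hinf.exists_subset_card_eq B
    filter_upwards [Filter.eventually_ge_atTop (F.sup id)] with t ht
    have hsub : F ⊆ (Finset.range (t + 1)).filter (fun t' => q₀ < dn α (β i) t') := by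
      intro x hx
      simp only [Finset.mem_filter, Finset.mem_range]
      constructor
      · have : x ≤ F.sup id := Finset.le_sup (f := id) hx
        omega
      · exact hFsub hx
    calc B = F.card := hFcard.symm
      _ ≤ mcount α (β i) q₀ t := Finset.card_le_card hsub
end
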